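/- arXiv:1604.02810 — 2 statements merged into one kernel-verified Lean document; each statement's English description precedes it below -/
import Mathlib

section
/- Let r : ℝⁿ → ℝ be C² with bounded second derivatives, and let z satisfy r(z) = 0 and ∇r(z) ≠ 0. Then there exists h₀ > 0 and c > 0 such that for all 0 < h < h₀ and all u in the ball of radius Υh centered at z + (Υ+1)h·∇r(z)/‖∇r(z)‖, one has r(u) ≥ c·h. (Here Υ > 0 is a fixed constant.) -/
open Metric

lemma taylor2_aux {E : Type*} [NormedAddCommGroup E] [NormedSpace ℝ E]
    (r : E → ℝ) (hr : ContDiff ℝ 2 r) (B : ℝ)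
    (hB2 : ∀ x, ‖fderiv ℝ (fderiv ℝ r) x‖ ≤ B) (z u : E) :
    |r u - r z - fderiv ℝ r z (u - z)| ≤ B * ‖u - z‖ ^ 2 := by
  have hdr : Differentiable ℝ (fderiv ℝ r) :=
    (hr.fderiv_right (m := 1) (by norm_num)).differentiable one_ne_zero
  have lip : ∀ x : E, ‖fderiv ℝ r x - fderiv ℝ r z‖ ≤ B * ‖x - z‖ := fun x =>
    convex_univ.norm_image_sub_le_of_norm_fderiv_le (fun y _ => hdr y)
      (fun y _ => hB2 y) trivial trivial
  have key := (convex_closedBall z ‖u - z‖).norm_image_sub_le_of_norm_fderiv_le'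
    (f := r) (φ := fderiv ℝ r z) (C := B * ‖u - z‖)
    (fun y _ => hr.differentiable two_ne_zero y)
    (fun y hy => (lip y).trans (by
      have hy' : ‖y - z‖ ≤ ‖u - z‖ := mem_closedBall_iff_norm.mp hy
      have hB0 : 0 ≤ B := (norm_nonneg (fderiv ℝ (fderiv ℝ r) z)).trans (hB2 z)
      exact mul_le_mul_of_nonneg_left hy' hB0))
    (mem_closedBall_self (norm_nonneg _)) (mem_closedBall_iff_norm.mpr le_rfl)
  calc |r u - r z - fderiv ℝ r z (u - z)| ≤ B * ‖u - z‖ * ‖u - z‖ := key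
    _ = B * ‖u - z‖ ^ 2 := by ring

theorem stmt_4 {n : ℕ} (r : EuclideanSpace ℝ (Fin n) → ℝ) (hr : ContDiff ℝ 2 r)
    (B : ℝ) (hB : ∀ x, ‖iteratedFDeriv ℝ 2 r x‖ ≤ B)
    (z : EuclideanSpace ℝ (Fin n)) (hz : r z = 0) (hgrad : gradient r z ≠ 0)
    (Υ : ℝ) (hΥ : 0 < Υ) :
    ∃ h₀ > 0, ∃ c > 0, ∀ h : ℝ, 0 < h → h < h₀ →
      ∀ u ∈ Metric.closedBall
          (z + (((Υ + 1) * h / ‖gradient r z‖) • gradient r z)) (Υ * h),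
        c * h ≤ r u := by
  set g := gradient r z with hg
  have hG : 0 < ‖g‖ := norm_pos_iff.mpr hgrad
  have hB0 : 0 ≤ B := (norm_nonneg _).trans (hB z)
  -- second derivative bound for fderiv of fderiv
  have hB2 : ∀ x, ‖fderiv ℝ (fderiv ℝ r) x‖ ≤ B := by
    intro x
    refine ContinuousLinearMap.opNorm_le_bound _ hB0 fun v => ?_
    refine ContinuousLinearMap.opNorm_le_bound _ (by positivity) fun w => ?_
    have h1 : fderiv ℝ (fderiv ℝ r) x v w = iteratedFDeriv ℝ 2 r x ![v, w] := by
      rw [iteratedFDeriv_two_apply]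
      simp
    have h2 : ‖iteratedFDeriv ℝ 2 r x ![v, w]‖ ≤ ‖iteratedFDeriv ℝ 2 r x‖ * (‖v‖ * ‖w‖) := by
      have := (iteratedFDeriv ℝ 2 r x).le_opNorm ![v, w]
      simpa [Fin.prod_univ_two, mul_assoc] using this
    calc ‖fderiv ℝ (fderiv ℝ r) x v w‖ ≤ ‖iteratedFDeriv ℝ 2 r x‖ * (‖v‖ * ‖w‖) := by
          rw [h1]; exact h2
      _ ≤ B * (‖v‖ * ‖w‖) := by gcongr; exact hB x
      _ = B * ‖v‖ * ‖w‖ := by ring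
  -- fderiv in terms of gradient
  have hfg : fderiv ℝ r z = InnerProductSpace.toDual ℝ _ g :=
    ((hr.differentiable two_ne_zero z).hasGradientAt).hasFDerivAt.fderiv
  have hfg' : ∀ v, fderiv ℝ r z v = inner ℝ g v := fun v => by
    rw [hfg]; rfl
  refine ⟨‖g‖ / (2 * (B + 1) * (2 * Υ + 1) ^ 2), by positivity, ‖g‖ / 2, by positivity, ?_⟩
  intro h hh hh0 u hu
  set p := z + (((Υ + 1) * h / ‖g‖) • g) with hp
  have hup : ‖u - p‖ ≤ Υ * h := mem_closedBall_iff_norm.mp hu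
  have hpz : ‖p - z‖ = (Υ + 1) * h := by
    have : p - z = ((Υ + 1) * h / ‖g‖) • g := by rw [hp]; abel
    rw [this, norm_smul, Real.norm_eq_abs, abs_of_nonneg (by positivity), div_mul_cancel₀]
    exact hG.ne'
  have huz : ‖u - z‖ ≤ (2 * Υ + 1) * h := by
    calc ‖u - z‖ = ‖(u - p) + (p - z)‖ := by abel_nf
      _ ≤ ‖u - p‖ + ‖p - z‖ := norm_add_le _ _
      _ ≤ Υ * h + (Υ + 1) * h := by rw [hpz]; linarith
      _ = (2 * Υ + 1) * h := by ring
  -- inner product lower bound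
  have hinner : (h : ℝ) * ‖g‖ ≤ inner ℝ g (u - z) := by
    have hdecomp : (u : EuclideanSpace ℝ (Fin n)) - z = (u - p) + ((Υ + 1) * h / ‖g‖) • g := by
      rw [hp]; abel
    have h1 : inner ℝ g (((Υ + 1) * h / ‖g‖) • g) = (Υ + 1) * h * ‖g‖ := by
      rw [real_inner_smul_right, real_inner_self_eq_norm_sq]
      field_simp
    have h2 : |(inner ℝ g (u - p) : ℝ)| ≤ ‖g‖ * (Υ * h) :=
      (abs_real_inner_le_norm g (u - p)).trans (by gcongr)
    have := neg_abs_le ((inner ℝ g (u - p)) : ℝ)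
    calc (h : ℝ) * ‖g‖ = (Υ + 1) * h * ‖g‖ - ‖g‖ * (Υ * h) := by ring
      _ ≤ (Υ + 1) * h * ‖g‖ + (inner ℝ g (u - p) : ℝ) := by nlinarith
      _ = inner ℝ g ((u - p) + ((Υ + 1) * h / ‖g‖) • g) := by
          rw [inner_add_right, h1]; ring
      _ = inner ℝ g (u - z) := by rw [← hdecomp]
  -- Taylor bound
  have htay := taylor2_aux r hr B hB2 z u
  rw [hz, sub_zero, hfg'] at htay
  have habs : r u ≥ inner ℝ g (u - z) - B * ‖u - z‖ ^ 2 := by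
    have := abs_le.mp htay
    linarith [this.1]
  have hquad : B * ‖u - z‖ ^ 2 ≤ B * ((2 * Υ + 1) * h) ^ 2 := by
    gcongr
  -- smallness of h
  have hsmall : B * ((2 * Υ + 1) * h) ^ 2 ≤ ‖g‖ / 2 * h := by
    have hh0' : h < ‖g‖ / (2 * (B + 1) * (2 * Υ + 1) ^ 2) := hh0
    have hden : (0:ℝ) < 2 * (B + 1) * (2 * Υ + 1) ^ 2 := by positivity
    have hmain : h * (2 * (B + 1) * (2 * Υ + 1) ^ 2) < ‖g‖ := by
      rw [← lt_div_iff₀ hden]; exact hh0'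
    have k1 : B * (2 * Υ + 1) ^ 2 * h ≤ (B + 1) * (2 * Υ + 1) ^ 2 * h :=
      mul_le_mul_of_nonneg_right (by nlinarith [sq_nonneg (2 * Υ + 1)]) hh.le
    have k2 : B * (2 * Υ + 1) ^ 2 * h ≤ ‖g‖ / 2 := by linarith
    calc B * ((2 * Υ + 1) * h) ^ 2 = (B * (2 * Υ + 1) ^ 2 * h) * h := by ring
      _ ≤ ‖g‖ / 2 * h := mul_le_mul_of_nonneg_right k2 hh.le
  calc ‖g‖ / 2 * h = h * ‖g‖ - ‖g‖ / 2 * h := by ring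
    _ ≤ inner ℝ g (u - z) - B * ((2 * Υ + 1) * h) ^ 2 := by linarith
    _ ≤ inner ℝ g (u - z) - B * ‖u - z‖ ^ 2 := by linarith
    _ ≤ r u := by linarith
end

section
/- Let r : ℝⁿ → ℝ be C² with r(y) = 0 and ∇r(y) ≠ 0, and let r̂ : U → ℝ be continuous on a neighborhood U of y with |r̂(u) − r(u)| ≤ δ on U, where δ is sufficiently small relative to ‖∇r(y)‖ and the second-derivative bound of r. Then there exists u with r̂(u) = 0 and ‖y − u‖ ≤ C·δ/‖∇r(y)‖² · ‖∇r(y)‖ for an absolute constant C (i.e., ‖y − u‖ = O(δ/‖∇r(y)‖)); the point u can be taken on the line y + λ∇r(y). -/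
open Set Metric

set_option maxHeartbeats 1000000 in
theorem stmt_9 {n : ℕ} (r : EuclideanSpace ℝ (Fin n) → ℝ) (hr : ContDiff ℝ 2 r)
    (B : ℝ) (hB : ∀ x, ‖iteratedFDeriv ℝ 2 r x‖ ≤ B)
    (y : EuclideanSpace ℝ (Fin n)) (hy : r y = 0) (hgrad : gradient r y ≠ 0) :
    ∃ C > 0, ∀ U ∈ nhds y, ∃ δ₀ > 0, ∀ δ : ℝ, 0 < δ → δ < δ₀ →
      ∀ rhat : EuclideanSpace ℝ (Fin n) → ℝ, ContinuousOn rhat U →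
        (∀ u ∈ U, |rhat u - r u| ≤ δ) →
        ∃ u, rhat u = 0 ∧ ‖y - u‖ ≤ C * δ / ‖gradient r y‖ ∧
          ∃ t : ℝ, u = y + t • gradient r y := by
  set g := gradient r y with hg
  set G := ‖g‖ with hGdef
  have hG : 0 < G := norm_pos_iff.2 hgrad
  have hB0 : 0 ≤ B := le_trans (norm_nonneg _) (hB y)
  have hd1 : ContDiff ℝ 1 (fderiv ℝ r) := hr.fderiv_right (by norm_num)
  have hdr : Differentiable ℝ r := hr.differentiable (by norm_num)
  -- second derivative bound
  have hB' : ∀ x, ‖fderiv ℝ (fderiv ℝ r) x‖ ≤ B := by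
    intro x
    have h1 : ‖fderiv ℝ (fderiv ℝ r) x‖ = ‖iteratedFDeriv ℝ 0 (fderiv ℝ (fderiv ℝ r)) x‖ :=
      by rw [norm_iteratedFDeriv_zero]
    rw [h1, norm_iteratedFDeriv_fderiv, norm_iteratedFDeriv_fderiv]
    exact hB x
  -- Lipschitz bound on fderiv
  have lip : ∀ z w, ‖fderiv ℝ r z - fderiv ℝ r w‖ ≤ B * ‖z - w‖ := by
    intro z w
    exact convex_univ.norm_image_sub_le_of_norm_fderiv_le
      (fun x _ => (hd1.differentiable one_ne_zero x))
      (fun x _ => hB' x) trivial trivial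
  -- fderiv at y in terms of gradient
  have hfd : ∀ v, fderiv ℝ r y v = inner ℝ g v := by
    intro v
    have : (InnerProductSpace.toDual ℝ (EuclideanSpace ℝ (Fin n))) g = fderiv ℝ r y := by
      rw [hg, gradient]
      exact LinearIsometryEquiv.apply_symm_apply _ _
    rw [← this]
    rfl
  -- Taylor estimate
  have taylor : ∀ t : ℝ, |r (y + t • g) - t * G ^ 2| ≤ B * ‖t • g‖ * ‖t • g‖ := by
    intro t
    set v := t • g with hv
    have hmem : y ∈ closedBall y ‖v‖ := mem_closedBall_self (norm_nonneg _)
    have hmem' : y + v ∈ closedBall y ‖v‖ := by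
      simp [mem_closedBall, dist_eq_norm]
    have htay := (convex_closedBall y ‖v‖).norm_image_sub_le_of_norm_fderiv_le' (𝕜 := ℝ)
      (f := r) (φ := fderiv ℝ r y) (C := B * ‖v‖)
      (fun x _ => hdr x)
      (fun x hx => by
        calc ‖fderiv ℝ r x - fderiv ℝ r y‖ ≤ B * ‖x - y‖ := lip x y
          _ ≤ B * ‖v‖ := by
            apply mul_le_mul_of_nonneg_left _ hB0
            simpa [dist_eq_norm] using hx)
      hmem hmem'
    have hsub : y + v - y = v := add_sub_cancel_left y v
    rw [hsub, hy, sub_zero] at htay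
    have hfdv : fderiv ℝ r y v = t * G ^ 2 := by
      rw [hfd, hv, real_inner_smul_right, real_inner_self_eq_norm_sq]
    rw [hfdv] at htay
    calc |r (y + v) - t * G ^ 2| ≤ (B * ‖v‖) * ‖v‖ := htay
      _ = B * ‖v‖ * ‖v‖ := by ring
  -- main argument
  refine ⟨2, by norm_num, ?_⟩
  intro U hU
  obtain ⟨ρ, hρ, hball⟩ := Metric.mem_nhds_iff.1 hU
  refine ⟨min (ρ * G / 4) (G ^ 2 / (4 * (B + 1))), ?_, ?_⟩
  · apply lt_min
    · positivity
    · positivity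
  intro δ hδ hδ' rhat hcont hclose
  set ε := 2 * δ / G ^ 2 with hε
  have hεpos : 0 < ε := by positivity
  have hδ1 : δ < ρ * G / 4 := lt_of_lt_of_le hδ' (min_le_left _ _)
  have hδ2 : δ < G ^ 2 / (4 * (B + 1)) := lt_of_lt_of_le hδ' (min_le_right _ _)
  -- ε * G < ρ
  have hεG : ε * G < ρ := by
    rw [hε]
    rw [div_mul_eq_mul_div, div_lt_iff₀ (by positivity)]
    have : 2 * δ * G < 2 * (ρ * G / 4) * G := by
      apply mul_lt_mul_of_pos_right _ hG
      linarith
    calc 2 * δ * G < 2 * (ρ * G / 4) * G := this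
      _ = ρ * (G ^ 2) / 2 := by ring
      _ ≤ ρ * G ^ 2 := by nlinarith [sq_nonneg G]
  -- remainder bound: B * (ε*G)^2 ≤ δ
  have hrem : B * (ε * G) * (ε * G) ≤ δ := by
    have h1 : ε * G = 2 * δ / G := by
      rw [hε]; field_simp
    rw [h1]
    have key : B * (2 * δ / G) * (2 * δ / G) = 4 * B * δ ^ 2 / G ^ 2 := by
      field_simp; ring
    rw [key, div_le_iff₀ (by positivity)]
    have h4 : 4 * (B + 1) * δ < G ^ 2 := by
      rw [lt_div_iff₀ (by positivity)] at hδ2; nlinarith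
    nlinarith
  have hnorm : ∀ t : ℝ, ‖t • g‖ = |t| * G := fun t => by rw [norm_smul, Real.norm_eq_abs]
  -- endpoints in U
  have hmemU : ∀ t : ℝ, |t| ≤ ε → y + t • g ∈ U := by
    intro t ht
    apply hball
    rw [mem_ball, dist_eq_norm, add_sub_cancel_left, hnorm]
    calc |t| * G ≤ ε * G := mul_le_mul_of_nonneg_right ht (le_of_lt hG)
      _ < ρ := hεG
  have hεG2 : ε * G ^ 2 = 2 * δ := by rw [hε]; field_simp
  -- values of r at endpoints
  have htp : δ ≤ r (y + ε • g) := by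
    have := taylor ε
    rw [hnorm, abs_of_pos hεpos] at this
    have h2 := abs_le.1 this
    nlinarith [h2.1]
  have htm : r (y + (-ε) • g) ≤ -δ := by
    have := taylor (-ε)
    rw [hnorm, abs_neg, abs_of_pos hεpos] at this
    have h2 := abs_le.1 this
    nlinarith [h2.2]
  -- rhat signs at endpoints
  have hrp : 0 ≤ rhat (y + ε • g) := by
    have hm := hmemU ε (by rw [abs_of_pos hεpos])
    have := abs_le.1 (hclose _ hm)
    linarith [this.1]
  have hrm : rhat (y + (-ε) • g) ≤ 0 := by
    have hm := hmemU (-ε) (by rw [abs_neg, abs_of_pos hεpos])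
    have := abs_le.1 (hclose _ hm)
    linarith [this.2]
  -- IVT
  set φ : ℝ → ℝ := fun t => rhat (y + t • g) with hφ
  have hφc : ContinuousOn φ (Icc (-ε) ε) := by
    apply hcont.comp
    · exact (continuous_const.add (continuous_id.smul continuous_const)).continuousOn
    · intro t ht
      exact hmemU t (abs_le.2 ⟨ht.1, ht.2⟩)
  have hIVT := intermediate_value_Icc (le_of_lt (neg_lt_self hεpos)) hφc
  have h0mem : (0 : ℝ) ∈ Icc (φ (-ε)) (φ ε) := ⟨hrm, hrp⟩
  obtain ⟨t, ht, htφ⟩ := hIVT h0mem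
  refine ⟨y + t • g, htφ, ?_, t, rfl⟩
  have : ‖y - (y + t • g)‖ = |t| * G := by
    rw [show y - (y + t • g) = -(t • g) by abel, norm_neg, hnorm]
  rw [this]
  have htabs : |t| ≤ ε := abs_le.2 ⟨ht.1, ht.2⟩
  calc |t| * G ≤ ε * G := mul_le_mul_of_nonneg_right htabs (le_of_lt hG)
    _ = 2 * δ / G := by rw [hε]; field_simp
end
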